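/- If b = f(a) where f_1(x)=x_1 and f_k(x) = x_k − Σ_{j=1}^{k−1} C(k−1,j−1) f_j(x) x_{k−j} for k > 1 (i.e., b is the cumulant sequence of a), and d = f(c) where c is the factorial-moment sequence of a, then b_k = Σ_{j=1}^k S_2(k,j) f_j(c) for all k ≥ 1. -/

import Mathlib

open Finset

/-- Stirling numbers of the second kind. -/
def stirling2 : ℕ → ℕ → ℕ
  | 0, 0 => 1
  | 0, _ + 1 => 0
  | _ + 1, 0 => 0
  | n + 1, k + 1 => (k + 1) * stirling2 n (k + 1) + stirling2 n k

/-- The transformation producing cumulants from moments: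
`f 1 x = x 1`, `f k x = x k − Σ_{j=1}^{k−1} C(k−1,j−1) f j x · x (k−j)`. -/
noncomputable def fcum (c : ℕ → ℝ) : ℕ → ℝ
  | 0 => 0
  | k + 1 => c (k + 1) - ∑ j ∈ (Finset.range k).attach,
      (k.choose j.1 : ℝ) * fcum c (j.1 + 1) * c (k - j.1)
decreasing_by
  have := j.2
  simp only [Finset.mem_range] at this
  omega


/-!
On exponential generating functions the Stirling transform `u ↦ (∑ₖ S₂(n,k) uₖ)ₙ` is the
substitution `t ↦ eᵗ - 1`, and `b = f(a)` is characterised by `A' = B' A`, where `A` is the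
generating function of `(1, a₁, a₂, …)`. Substitution is compatible with products and with the
derivative (the chain-rule factor `eᵗ` appears on both sides of `A' = B' A`), so the Stirling
transform of `f(c)` satisfies the recursion characterising `f(a)`. On coefficients this
compatibility is the identity `C(l+q,l) S₂(n+1,l+q+1) = ∑ⱼ C(n,j) S₂(j+1,l+1) S₂(n-j,q)`.
-/

open Nat

theorem stirling2_eq_stirlingSecond : stirling2 = stirlingSecond := by
  funext n k
  induction n generalizing k with
  | zero => cases k <;> rfl
  | succ n ih => cases k <;> simp [stirling2, stirlingSecond, ih]

theorem sum_antidiagonal_choose_succ_mul_stirlingSecond (n l q : ℕ) :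
    ∑ p ∈ antidiagonal (n + 1),
        (n + 1).choose p.1 * (stirlingSecond (p.1 + 1) (l + 1) * stirlingSecond p.2 q) =
      ∑ p ∈ antidiagonal n,
          n.choose p.1 * (stirlingSecond (p.1 + 1) (l + 1) * stirlingSecond (p.2 + 1) q) +
        ∑ p ∈ antidiagonal n,
          n.choose p.1 * (stirlingSecond (p.1 + 1 + 1) (l + 1) * stirlingSecond p.2 q) := by
  have h := sum_antidiagonal_choose_succ_mul (R := ℕ)
    (fun i j => stirlingSecond (i + 1) (l + 1) * stirlingSecond j q) n
  simp only [Nat.cast_id] at h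
  rw [h]
  congr 1
  refine sum_congr rfl fun p hp => ?_
  rw [choose_symm_of_eq_add (mem_antidiagonal.mp hp).symm]

-- Both sides are `n!` times the `tⁿ`-coefficient of `eᵗ (eᵗ - 1)ˡ / l! · (eᵗ - 1)^q / q!`.
theorem choose_mul_stirlingSecond_succ (n l q : ℕ) :
    (l + q).choose l * stirlingSecond (n + 1) (l + q + 1) =
      ∑ p ∈ antidiagonal n,
        n.choose p.1 * (stirlingSecond (p.1 + 1) (l + 1) * stirlingSecond p.2 q) := by
  induction n generalizing l q with
  | zero => rcases l with _ | l <;> rcases q with _ | q <;> simp [stirlingSecond]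
  | succ n ih =>
    have hleft : ∑ p ∈ antidiagonal n,
        n.choose p.1 * (stirlingSecond (p.1 + 1 + 1) (l + 1) * stirlingSecond p.2 q) =
          (l + 1) * ((l + q).choose l * stirlingSecond (n + 1) (l + q + 1)) +
          ∑ p ∈ antidiagonal n,
            n.choose p.1 * (stirlingSecond (p.1 + 1) l * stirlingSecond p.2 q) := by
      rw [ih, mul_sum, ← sum_add_distrib]
      refine sum_congr rfl fun p _ => ?_
      rw [stirlingSecond_succ_succ]
      ring
    have hright (q : ℕ) : ∑ p ∈ antidiagonal n,
        n.choose p.1 * (stirlingSecond (p.1 + 1) (l + 1) * stirlingSecond (p.2 + 1) (q + 1)) =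
          (q + 1) * ((l + (q + 1)).choose l * stirlingSecond (n + 1) (l + (q + 1) + 1)) +
          (l + q).choose l * stirlingSecond (n + 1) (l + q + 1) := by
      rw [ih, ih, mul_sum, ← sum_add_distrib]
      refine sum_congr rfl fun p _ => ?_
      rw [stirlingSecond_succ_succ p.2]
      ring
    rw [sum_antidiagonal_choose_succ_mul_stirlingSecond, hleft]
    rcases q with _ | q
    · rcases l with _ | l
      · simp [stirlingSecond_succ_succ]
      · rw [← ih]
        simp [stirlingSecond_succ_succ]
    · rw [hright]
      rcases l with _ | l
      · simp [stirlingSecond_succ_succ]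
        ring
      · rw [← ih, show l + 1 + (q + 1) = l + q + 1 + 1 by ring,
          show l + 1 + q = l + q + 1 by ring, show l + (q + 1) = l + q + 1 by ring,
          stirlingSecond_succ_succ (n + 1), choose_succ_succ']
        ring

theorem sum_range_sum_antidiagonal {M : Type*} [AddCommMonoid M] {n : ℕ} (f : ℕ → ℕ → M)
    (hf : ∀ l q, n < l + q → f l q = 0) :
    ∑ s ∈ range (n + 1), ∑ p ∈ antidiagonal s, f p.1 p.2 =
      ∑ l ∈ range (n + 1), ∑ q ∈ range (n + 1), f l q := by
  rw [sum_comm' (t' := (range (n + 1) ×ˢ range (n + 1)).filter fun p => p.1 + p.2 ≤ n)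
    (s' := fun p => {p.1 + p.2}) (fun s p => by
      simp only [mem_range, HasAntidiagonal.mem_antidiagonal, mem_filter, mem_product,
        mem_singleton]
      omega)]
  simp only [sum_singleton]
  rw [sum_filter_of_ne (fun p _ hp => by by_contra h; exact hp (hf _ _ (by omega))), sum_product]

section StirlingTransform

variable {R : Type*} [CommSemiring R]

def stirlingTransform (u : ℕ → R) (n : ℕ) : R :=
  ∑ k ∈ range (n + 1), (stirlingSecond n k : R) * u k

-- The coefficient of `tⁿ / n!` in `U'(t) V(t)`, for `U`, `V` the exponential generating
-- functions of `u`, `v`.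
def derivConv (u v : ℕ → R) (n : ℕ) : R :=
  ∑ p ∈ antidiagonal n, (n.choose p.1 : R) * u (p.1 + 1) * v p.2

theorem stirlingTransform_eq_sum_range (u : ℕ → R) {n N : ℕ} (h : n < N) :
    stirlingTransform u n = ∑ k ∈ range N, (stirlingSecond n k : R) * u k := by
  refine sum_subset (range_subset_range.mpr h) fun k _ hk => ?_
  rw [stirlingSecond_eq_zero_of_lt (by simpa using hk), Nat.cast_zero, zero_mul]

theorem stirlingTransform_succ (u : ℕ → R) (n : ℕ) :
    stirlingTransform u (n + 1) =
      ∑ k ∈ range (n + 1), (stirlingSecond (n + 1) (k + 1) : R) * u (k + 1) := by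
  simp [stirlingTransform, sum_range_succ' _ (n + 1)]

theorem stirlingTransform_eq_sum_Icc (u : ℕ → R) {n : ℕ} (hn : n ≠ 0) :
    stirlingTransform u n = ∑ k ∈ Icc 1 n, (stirlingSecond n k : R) * u k := by
  obtain ⟨n, rfl⟩ := exists_eq_succ_of_ne_zero hn
  rw [stirlingTransform_succ, ← Ico_add_one_right_eq_Icc, sum_Ico_eq_sum_range]
  simp only [add_tsub_cancel_right, add_comm 1]

theorem derivConv_stirlingTransform (u v : ℕ → R) (n : ℕ) :
    derivConv (stirlingTransform u) (stirlingTransform v) n =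
      ∑ s ∈ range (n + 1), (stirlingSecond (n + 1) (s + 1) : R) * derivConv u v s := by
  set f : ℕ → ℕ → R := fun l q =>
    ((l + q).choose l * stirlingSecond (n + 1) (l + q + 1) : ℕ) * u (l + 1) * v q
  have hu : ∀ i ≤ n, stirlingTransform u (i + 1) =
      ∑ l ∈ range (n + 1), (stirlingSecond (i + 1) (l + 1) : R) * u (l + 1) := fun i hi => by
    rw [stirlingTransform_eq_sum_range u (N := n + 2) (by omega), sum_range_succ']
    simp
  have hv : ∀ j ≤ n, stirlingTransform v j =
      ∑ q ∈ range (n + 1), (stirlingSecond j q : R) * v q := fun j hj =>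
    stirlingTransform_eq_sum_range v (by omega)
  calc derivConv (stirlingTransform u) (stirlingTransform v) n
      = ∑ p ∈ antidiagonal n, ∑ l ∈ range (n + 1), ∑ q ∈ range (n + 1),
          (n.choose p.1 : R) * stirlingSecond (p.1 + 1) (l + 1) * stirlingSecond p.2 q *
            (u (l + 1) * v q) := by
        rw [derivConv]
        refine sum_congr rfl fun p hp => ?_
        rw [HasAntidiagonal.mem_antidiagonal] at hp
        rw [hu p.1 (by omega), hv p.2 (by omega), mul_assoc, sum_mul_sum]
        simp only [mul_sum]
        exact sum_congr rfl fun l _ => sum_congr rfl fun q _ => by ring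
    _ = ∑ l ∈ range (n + 1), ∑ q ∈ range (n + 1), f l q := by
        rw [sum_comm]
        refine sum_congr rfl fun l _ => ?_
        rw [sum_comm]
        refine sum_congr rfl fun q _ => ?_
        simp only [f, choose_mul_stirlingSecond_succ, ← sum_mul]
        push_cast
        ring_nf
    _ = ∑ s ∈ range (n + 1), ∑ p ∈ antidiagonal s, f p.1 p.2 := by
        refine (sum_range_sum_antidiagonal f fun l q h => ?_).symm
        simp [f, stirlingSecond_eq_zero_of_lt (show n + 1 < l + q + 1 by omega)]
    _ = _ := by
        refine sum_congr rfl fun s _ => ?_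
        rw [derivConv, mul_sum]
        refine sum_congr rfl fun p hp => ?_
        rw [HasAntidiagonal.mem_antidiagonal] at hp
        simp only [f, hp]
        push_cast
        ring

theorem derivConv_update_zero_one (g x : ℕ → R) (k : ℕ) :
    derivConv g (Function.update x 0 1) k =
      g (k + 1) + ∑ j ∈ range k, (k.choose j : R) * g (j + 1) * x (k - j) := by
  rw [derivConv, Finset.Nat.sum_antidiagonal_eq_sum_range_succ
    (fun i j => (k.choose i : R) * g (i + 1) * Function.update x 0 1 j), sum_range_succ, add_comm]
  simp only [choose_self, Nat.cast_one, one_mul, tsub_self, Function.update_self, mul_one]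
  congr 1
  refine sum_congr rfl fun j hj => ?_
  rw [Function.update_of_ne (by simp at hj; omega)]

end StirlingTransform

theorem fcum_succ (x : ℕ → ℝ) (k : ℕ) :
    fcum x (k + 1) =
      x (k + 1) - ∑ j ∈ range k, (k.choose j : ℝ) * fcum x (j + 1) * x (k - j) := by
  rw [fcum, sum_attach (range k) fun j => (k.choose j : ℝ) * fcum x (j + 1) * x (k - j)]

theorem derivConv_fcum (x : ℕ → ℝ) (k : ℕ) :
    derivConv (fcum x) (Function.update x 0 1) k = x (k + 1) := by
  rw [derivConv_update_zero_one, fcum_succ, sub_add_cancel]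

theorem eq_fcum_of_derivConv {x g : ℕ → ℝ}
    (hg : ∀ k, derivConv g (Function.update x 0 1) k = x (k + 1)) (k : ℕ) :
    g (k + 1) = fcum x (k + 1) := by
  induction k using Nat.strong_induction_on with
  | _ k ih =>
    have hk := hg k
    rw [derivConv_update_zero_one, ← eq_sub_iff_add_eq] at hk
    rw [hk, fcum_succ]
    congr 1
    exact sum_congr rfl fun j hj => by rw [ih j (mem_range.mp hj)]

/-- If `a` is related to `c` by `a_k = Σ_{j=1}^k S_2(k,j) c_j` (i.e. `c` is the factorial-moment
sequence of `a`), and `b = f(a)` is the cumulant sequence of `a`, then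
`b_k = Σ_{j=1}^k S_2(k,j) f_j(c)`. -/
theorem cumulants_via_factorial_cumulants (a b c : ℕ → ℝ)
    (hac : ∀ k, 1 ≤ k → a k = ∑ j ∈ Finset.Icc 1 k, (stirling2 k j : ℝ) * c j)
    (hb : ∀ k, b k = fcum a k) :
    ∀ k, 1 ≤ k → b k = ∑ j ∈ Finset.Icc 1 k, (stirling2 k j : ℝ) * fcum c j := by
  have ha : Function.update a 0 1 = stirlingTransform (Function.update c 0 1) := by
    funext n
    rcases n with _ | n
    · simp [stirlingTransform]
    · rw [Function.update_of_ne n.succ_ne_zero, hac _ (by omega),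
        stirlingTransform_eq_sum_Icc _ n.succ_ne_zero, stirling2_eq_stirlingSecond]
      exact sum_congr rfl fun j hj => by
        rw [Function.update_of_ne (by simp at hj; omega)]
  have hcum : ∀ k,
      derivConv (stirlingTransform (fcum c)) (Function.update a 0 1) k = a (k + 1) := by
    intro k
    have hak := congr_fun ha (k + 1)
    rw [Function.update_of_ne k.succ_ne_zero] at hak
    rw [ha, derivConv_stirlingTransform, hak, stirlingTransform_succ]
    simp only [derivConv_fcum, Function.update_of_ne (succ_ne_zero _)]
  intro k hk
  obtain ⟨k, rfl⟩ := Nat.exists_eq_add_of_le' hk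
  rw [hb, ← eq_fcum_of_derivConv hcum, stirlingTransform_eq_sum_Icc _ k.succ_ne_zero,
    stirling2_eq_stirlingSecond]
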